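/- arXiv:1812.01666 — 4 statements merged into one kernel-verified Lean document; each statement's English description precedes it below -/
import Mathlib

section
/- The null space of Gᵀ is exactly the column space of X: the kernel of the linear map v ↦ Gᵀ · v from ℝ^(p+q) to ℝ^p equals the range of the linear map w ↦ X · w from ℝ^q to ℝ^(p+q). -/
/-!
Since `Gᵀ = [I | 0] M⁻¹`, the kernel of `Gᵀ` is the image under `M` of the kernel of `[I | 0]`,
i.e. of the vectors `(0, z)`. That image is the column space of `M [0; I] = [M₁₂; M₂₂]`, and
`[M₁₂; M₂₂] = X M₂₂` with `M₂₂` invertible, so it is the column space of `X`.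
-/

open Matrix

namespace Matrix

variable {R : Type*} [CommRing R] {k l m n : Type*} [Fintype m] [Fintype n] [DecidableEq n]

theorem range_mulVecLin_mul_of_isUnit (B : Matrix k n R) {U : Matrix n n R} (hU : IsUnit U) :
    LinearMap.range (B * U).mulVecLin = LinearMap.range B.mulVecLin := by
  rw [mulVecLin_mul, LinearMap.range_comp_of_range_eq_top]
  exact LinearMap.range_eq_top.mpr (mulVec_surjective_iff_isUnit.mpr hU)

theorem ker_mulVecLin_mul_inv [DecidableEq m] (A : Matrix l m R) {M : Matrix m m R}
    (hM : IsUnit M) :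
    LinearMap.ker (A * M⁻¹).mulVecLin = (LinearMap.ker A.mulVecLin).map M.mulVecLin := by
  have hMdet := (isUnit_iff_isUnit_det M).mp hM
  ext v
  simp only [LinearMap.mem_ker, Submodule.mem_map, mulVecLin_apply, ← mulVec_mulVec]
  constructor
  · exact fun h ↦ ⟨M⁻¹ *ᵥ v, h, by rw [mulVec_mulVec, mul_nonsing_inv M hMdet, one_mulVec]⟩
  · rintro ⟨w, hw, rfl⟩
    rwa [mulVec_mulVec w M⁻¹, nonsing_inv_mul M hMdet, one_mulVec]

theorem ker_mulVecLin_fromCols_one_zero [DecidableEq m] :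
    LinearMap.ker (fromCols (1 : Matrix m m R) (0 : Matrix m n R)).mulVecLin =
      LinearMap.range (fromRows (0 : Matrix m n R) (1 : Matrix n n R)).mulVecLin := by
  ext v
  simp only [LinearMap.mem_ker, LinearMap.mem_range, mulVecLin_apply, fromCols_mulVec,
    fromRows_mulVec, one_mulVec, zero_mulVec, add_zero]
  constructor
  · intro h
    refine ⟨v ∘ Sum.inr, ?_⟩
    ext (i | i)
    · exact (congrFun h i).symm
    · rfl
  · rintro ⟨w, rfl⟩
    rfl

theorem fromBlocks_mul_fromRows_zero_one (A : Matrix m m R) (B : Matrix m n R)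
    (C : Matrix n m R) (D : Matrix n n R) :
    fromBlocks A B C D * fromRows (0 : Matrix m n R) (1 : Matrix n n R) = fromRows B D := by
  simp only [fromBlocks_mul_fromRows, Matrix.mul_zero, Matrix.mul_one, zero_add]

end Matrix

/-- The null space of Gᵀ is exactly the column space of X: the kernel of the linear map
v ↦ Gᵀ · v from ℝ^(p+q) to ℝ^p equals the range of the linear map w ↦ X · w
from ℝ^q to ℝ^(p+q). -/
theorem stmt_4 {p q : ℕ}
    (M₁₁ : Matrix (Fin p) (Fin p) ℝ) (M₁₂ : Matrix (Fin p) (Fin q) ℝ)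
    (M₂₂ : Matrix (Fin q) (Fin q) ℝ)
    (M : Matrix (Fin p ⊕ Fin q) (Fin p ⊕ Fin q) ℝ)
    (hM : M = Matrix.fromBlocks M₁₁ M₁₂ M₁₂ᵀ M₂₂)
    (hMinv : IsUnit M) (hM₂₂inv : IsUnit M₂₂)
    (N : Matrix (Fin p) (Fin q) ℝ) (hN : N = M₁₂ * M₂₂⁻¹)
    (X : Matrix (Fin p ⊕ Fin q) (Fin q) ℝ) (hX : X = Matrix.fromRows N 1)
    (GT : Matrix (Fin p) (Fin p ⊕ Fin q) ℝ)
    (hGT : GT = Matrix.fromCols (1 : Matrix (Fin p) (Fin p) ℝ) (0 : Matrix (Fin p) (Fin q) ℝ) * M⁻¹) :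
    LinearMap.ker GT.mulVecLin = LinearMap.range X.mulVecLin := by
  have hXM₂₂ : X * M₂₂ = fromRows M₁₂ M₂₂ := by
    rw [hX, hN, fromRows_mul, Matrix.one_mul,
      nonsing_inv_mul_cancel_right _ _ ((isUnit_iff_isUnit_det M₂₂).mp hM₂₂inv)]
  calc LinearMap.ker GT.mulVecLin
      = (LinearMap.range (fromRows (0 : Matrix (Fin p) (Fin q) ℝ) 1).mulVecLin).map
          M.mulVecLin := by
        rw [hGT, ker_mulVecLin_mul_inv _ hMinv, ker_mulVecLin_fromCols_one_zero]
    _ = LinearMap.range (fromRows M₁₂ M₂₂).mulVecLin := by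
        rw [← LinearMap.range_comp, ← mulVecLin_mul, hM, fromBlocks_mul_fromRows_zero_one]
    _ = LinearMap.range X.mulVecLin := by
        rw [← hXM₂₂, range_mulVecLin_mul_of_isUnit _ hM₂₂inv]
end

section
/- If moreover M₁₁ and M₂₂ are symmetric (so that M is symmetric), then Xᵀ M⁻¹ = [0 | M₂₂⁻¹] as a q×(p+q) block matrix; in particular, for every vector l ∈ ℝ^(p+q) one has Xᵀ (M⁻¹ l) = M₂₂⁻¹ l_β, where l_β ∈ ℝ^q denotes the last q components of l, and Xᵀ G = 0 where G is the (p+q)×p matrix of the first p columns of M⁻¹. -/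
open Matrix

/-!
Multiplying the last block row `[Bᵀ | D]` of `M = [[A, B], [Bᵀ, D]]` by `D⁻¹` gives
`[D⁻¹ Bᵀ | 1]`, which for symmetric `D` is exactly `Xᵀ = [(B D⁻¹)ᵀ | 1]`. Hence
`Xᵀ = [0 | D⁻¹] M`, and multiplying on the right by `M⁻¹` gives `Xᵀ M⁻¹ = [0 | D⁻¹]`. The
statements about `M⁻¹ l` and about the first block column `G` of `M⁻¹` are read off this.
-/

namespace Matrix

variable {m n k α : Type*} [Fintype m] [Fintype n] [DecidableEq n] [CommRing α]

theorem fromCols_zero_inv_mul_fromBlocks (A : Matrix m k α) (B : Matrix m n α)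
    (C : Matrix n k α) {D : Matrix n n α} (hD : IsUnit D) :
    fromCols (0 : Matrix n m α) D⁻¹ * fromBlocks A B C D = fromCols (D⁻¹ * C) 1 := by
  rw [fromCols_mul_fromBlocks, nonsing_inv_mul _ ((isUnit_iff_isUnit_det D).mp hD)]
  simp

omit [Fintype m] in
theorem IsSymm.transpose_mul_inv {D : Matrix n n α} (hD : D.IsSymm) (B : Matrix m n α) :
    (B * D⁻¹)ᵀ = D⁻¹ * Bᵀ := by
  rw [transpose_mul, hD.inv.eq]

variable [DecidableEq m]

theorem transpose_fromRows_mul_inv_fromBlocks (A : Matrix m m α) (B : Matrix m n α)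
    {D : Matrix n n α} (hD : D.IsSymm) (hDu : IsUnit D) (hM : IsUnit (fromBlocks A B Bᵀ D)) :
    (fromRows (B * D⁻¹) (1 : Matrix n n α))ᵀ * (fromBlocks A B Bᵀ D)⁻¹ =
      fromCols (0 : Matrix n m α) D⁻¹ := by
  have hXT : (fromRows (B * D⁻¹) (1 : Matrix n n α))ᵀ =
      fromCols (0 : Matrix n m α) D⁻¹ * fromBlocks A B Bᵀ D := by
    rw [fromCols_zero_inv_mul_fromBlocks _ _ _ hDu, transpose_fromRows, hD.transpose_mul_inv,
      transpose_one]
  rw [hXT, mul_nonsing_inv_cancel_right _ _ ((isUnit_iff_isUnit_det _).mp hM)]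

end Matrix

theorem stmt_7_general {p q : ℕ}
    (M₁₁ : Matrix (Fin p) (Fin p) ℝ) (M₁₂ : Matrix (Fin p) (Fin q) ℝ)
    (M₂₂ : Matrix (Fin q) (Fin q) ℝ)
    (M : Matrix (Fin p ⊕ Fin q) (Fin p ⊕ Fin q) ℝ)
    (hM : M = Matrix.fromBlocks M₁₁ M₁₂ M₁₂ᵀ M₂₂)
    (hMinv : IsUnit M) (hM₂₂inv : IsUnit M₂₂)
    (hM₂₂sym : M₂₂ᵀ = M₂₂)
    (N : Matrix (Fin p) (Fin q) ℝ) (hN : N = M₁₂ * M₂₂⁻¹)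
    (X : Matrix (Fin p ⊕ Fin q) (Fin q) ℝ) (hX : X = Matrix.fromRows N 1)
    (G : Matrix (Fin p ⊕ Fin q) (Fin p) ℝ)
    (hG : G = M⁻¹ * Matrix.fromRows (1 : Matrix (Fin p) (Fin p) ℝ) (0 : Matrix (Fin q) (Fin p) ℝ)) :
    Xᵀ * M⁻¹ = Matrix.fromCols (0 : Matrix (Fin q) (Fin p) ℝ) M₂₂⁻¹ ∧
      (∀ l : Fin p ⊕ Fin q → ℝ,
        Xᵀ.mulVec (M⁻¹.mulVec l) = M₂₂⁻¹.mulVec (fun j => l (Sum.inr j))) ∧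
      Xᵀ * G = 0 := by
  have hXM : Xᵀ * M⁻¹ = fromCols (0 : Matrix (Fin q) (Fin p) ℝ) M₂₂⁻¹ := by
    subst hM hN hX
    exact transpose_fromRows_mul_inv_fromBlocks M₁₁ M₁₂ hM₂₂sym hM₂₂inv hMinv
  refine ⟨hXM, fun l => ?_, ?_⟩
  · rw [mulVec_mulVec, hXM, fromCols_mulVec, zero_mulVec, zero_add]
    rfl
  · rw [hG, ← Matrix.mul_assoc, hXM, fromCols_mul_fromRows]
    simp

/-- If moreover M₁₁ and M₂₂ are symmetric (so that M is symmetric), then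
Xᵀ M⁻¹ = [0 | M₂₂⁻¹] as a q×(p+q) block matrix; in particular, for every vector
l ∈ ℝ^(p+q) one has Xᵀ (M⁻¹ l) = M₂₂⁻¹ l_β where l_β denotes the last q components of l,
and Xᵀ G = 0 where G is the (p+q)×p matrix of the first p columns of M⁻¹. -/
theorem stmt_7 {p q : ℕ}
    (M₁₁ : Matrix (Fin p) (Fin p) ℝ) (M₁₂ : Matrix (Fin p) (Fin q) ℝ)
    (M₂₂ : Matrix (Fin q) (Fin q) ℝ)
    (M : Matrix (Fin p ⊕ Fin q) (Fin p ⊕ Fin q) ℝ)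
    (hM : M = Matrix.fromBlocks M₁₁ M₁₂ M₁₂ᵀ M₂₂)
    (hMinv : IsUnit M) (hM₂₂inv : IsUnit M₂₂)
    (hM₁₁sym : M₁₁ᵀ = M₁₁) (hM₂₂sym : M₂₂ᵀ = M₂₂)
    (N : Matrix (Fin p) (Fin q) ℝ) (hN : N = M₁₂ * M₂₂⁻¹)
    (X : Matrix (Fin p ⊕ Fin q) (Fin q) ℝ) (hX : X = Matrix.fromRows N 1)
    (G : Matrix (Fin p ⊕ Fin q) (Fin p) ℝ)
    (hG : G = M⁻¹ * Matrix.fromRows (1 : Matrix (Fin p) (Fin p) ℝ) (0 : Matrix (Fin q) (Fin p) ℝ)) :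
    Xᵀ * M⁻¹ = Matrix.fromCols (0 : Matrix (Fin q) (Fin p) ℝ) M₂₂⁻¹ ∧
      (∀ l : Fin p ⊕ Fin q → ℝ,
        Xᵀ.mulVec (M⁻¹.mulVec l) = M₂₂⁻¹.mulVec (fun j => l (Sum.inr j))) ∧
      Xᵀ * G = 0 :=
  stmt_7_general M₁₁ M₁₂ M₂₂ M hM hMinv hM₂₂inv hM₂₂sym N hN X hX G hG
end

section
/- (Normal form dynamics, equation (24) of the paper.) The curve η : ℝ → ℝ^q defined by η(t) = N(t)ᵀ x_α(t) + x_β(t) is differentiable at t₀, and its derivative is η'(t₀) = M₂₂(t₀)⁻¹ l_β(t₀) + N'(t₀)ᵀ x_α(t₀). In particular the derivative of η does not depend on the input value τ(t₀). -/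
open Matrix

/-- (Normal form dynamics, equation (24) of the paper.) The curve
η(t) = N(t)ᵀ x_α(t) + x_β(t) is differentiable at t₀, with derivative
η'(t₀) = M₂₂(t₀)⁻¹ l_β(t₀) + N'(t₀)ᵀ x_α(t₀); in particular the derivative of η
does not depend on the input value τ(t₀). -/
theorem stmt_8 {p q : ℕ}
    (M₁₁ : ℝ → Matrix (Fin p) (Fin p) ℝ) (M₁₂ : ℝ → Matrix (Fin p) (Fin q) ℝ)
    (M₂₂ : ℝ → Matrix (Fin q) (Fin q) ℝ)
    (M : ℝ → Matrix (Fin p ⊕ Fin q) (Fin p ⊕ Fin q) ℝ)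
    (hM : ∀ t, M t = Matrix.fromBlocks (M₁₁ t) (M₁₂ t) (M₁₂ t)ᵀ (M₂₂ t))
    (hM₁₁sym : ∀ t, (M₁₁ t)ᵀ = M₁₁ t) (hM₂₂sym : ∀ t, (M₂₂ t)ᵀ = M₂₂ t)
    (hM₂₂inv : ∀ t, IsUnit (M₂₂ t)) (hMinv : ∀ t, IsUnit (M t))
    (N : ℝ → Matrix (Fin p) (Fin q) ℝ) (hN : ∀ t, N t = M₁₂ t * (M₂₂ t)⁻¹)
    (G : ℝ → Matrix (Fin p ⊕ Fin q) (Fin p) ℝ)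
    (hG : ∀ t, G t = (M t)⁻¹ *
      Matrix.fromRows (1 : Matrix (Fin p) (Fin p) ℝ) (0 : Matrix (Fin q) (Fin p) ℝ))
    (x : ℝ → (Fin p ⊕ Fin q) → ℝ) (l : ℝ → (Fin p ⊕ Fin q) → ℝ) (τ : ℝ → Fin p → ℝ)
    (xα : ℝ → Fin p → ℝ) (hxα : ∀ t i, xα t i = x t (Sum.inl i))
    (xβ : ℝ → Fin q → ℝ) (hxβ : ∀ t j, xβ t j = x t (Sum.inr j))
    (lβ : ℝ → Fin q → ℝ) (hlβ : ∀ t j, lβ t j = l t (Sum.inr j))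
    (t₀ : ℝ)
    (hx : HasDerivAt x ((M t₀)⁻¹.mulVec (l t₀) + (G t₀).mulVec (τ t₀)) t₀)
    (N' : Matrix (Fin p) (Fin q) ℝ)
    (hN' : ∀ i k, HasDerivAt (fun t => N t i k) (N' i k) t₀)
    (η : ℝ → Fin q → ℝ)
    (hη : ∀ t, η t = (N t)ᵀ.mulVec (xα t) + xβ t) :
    HasDerivAt η (((M₂₂ t₀)⁻¹).mulVec (lβ t₀) + N'ᵀ.mulVec (xα t₀)) t₀ := by
  set v : (Fin p ⊕ Fin q) → ℝ := (M t₀)⁻¹.mulVec (l t₀) + (G t₀).mulVec (τ t₀) with hv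
  set R : Matrix (Fin q) (Fin p ⊕ Fin q) ℝ :=
    fromCols (N t₀)ᵀ (1 : Matrix (Fin q) (Fin q) ℝ) with hR
  set P : Matrix (Fin q) (Fin p ⊕ Fin q) ℝ :=
    fromCols (0 : Matrix (Fin q) (Fin p) ℝ) (1 : Matrix (Fin q) (Fin q) ℝ) with hP
  -- key matrix identity : R = M₂₂⁻¹ * P * M, hence R * M⁻¹ = M₂₂⁻¹ * P
  have hNT : (N t₀)ᵀ = (M₂₂ t₀)⁻¹ * (M₁₂ t₀)ᵀ := by
    rw [hN, transpose_mul, transpose_nonsing_inv, hM₂₂sym]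
  have hRM : R = (M₂₂ t₀)⁻¹ * P * (M t₀) := by
    rw [hP, hM, Matrix.mul_assoc, fromCols_mul_fromBlocks]
    simp [hR, hNT, mul_fromCols,
      Matrix.nonsing_inv_mul _ ((Matrix.isUnit_iff_isUnit_det _).mp (hM₂₂inv t₀))]
  have hRMinv : R * (M t₀)⁻¹ = (M₂₂ t₀)⁻¹ * P := by
    rw [hRM, Matrix.mul_nonsing_inv_cancel_right _ _
      ((Matrix.isUnit_iff_isUnit_det _).mp (hMinv t₀))]
  -- key vector identity
  have hPl : P.mulVec (l t₀) = lβ t₀ := by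
    funext j
    simp [hP, Matrix.mulVec, dotProduct, Fintype.sum_sum_type, fromCols, hlβ,
      Matrix.one_apply, Finset.sum_ite_eq']
  have hPF : P * Matrix.fromRows (1 : Matrix (Fin p) (Fin p) ℝ)
      (0 : Matrix (Fin q) (Fin p) ℝ) = 0 := by
    rw [hP, fromCols_mul_fromRows]
    simp
  have hkey : R.mulVec v = (M₂₂ t₀)⁻¹.mulVec (lβ t₀) := by
    rw [hv, hG, Matrix.mulVec_add, Matrix.mulVec_mulVec, Matrix.mulVec_mulVec,
      ← Matrix.mul_assoc, hRMinv, Matrix.mul_assoc, hPF, Matrix.mul_zero, Matrix.zero_mulVec,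
      add_zero, ← Matrix.mulVec_mulVec, hPl]
  have hkey' : ∀ k, (∑ i, N t₀ i k * v (Sum.inl i)) + v (Sum.inr k)
      = (M₂₂ t₀)⁻¹.mulVec (lβ t₀) k := by
    intro k
    have hvel : v = Sum.elim (fun i => v (Sum.inl i)) (fun j => v (Sum.inr j)) := by
      funext s; cases s <;> rfl
    have := congrFun hkey k
    rw [hR, hvel, fromCols_mulVec_sumElim] at this
    simpa [Matrix.mulVec, dotProduct, Matrix.one_apply, Finset.sum_ite_eq', transpose_apply]
      using this
  -- coordinates of derivative of x
  have hxc : ∀ s, HasDerivAt (fun t => x t s) (v s) t₀ := fun s =>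
    hasDerivAt_pi.mp hx s
  rw [hasDerivAt_pi]
  intro k
  have hcoord : ∀ t, η t k = (∑ i, N t i k * x t (Sum.inl i)) + x t (Sum.inr k) := by
    intro t
    rw [hη]
    simp [Matrix.mulVec, dotProduct, transpose_apply, hxα, hxβ]
  have hD : HasDerivAt (fun t => (∑ i, N t i k * x t (Sum.inl i)) + x t (Sum.inr k))
      ((∑ i, (N' i k * x t₀ (Sum.inl i) + N t₀ i k * v (Sum.inl i))) + v (Sum.inr k)) t₀ := by
    exact (HasDerivAt.fun_sum fun i _ => (hN' i k).mul (hxc (Sum.inl i))).add (hxc (Sum.inr k))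
  have hη' : HasDerivAt (fun t => η t k)
      ((∑ i, (N' i k * x t₀ (Sum.inl i) + N t₀ i k * v (Sum.inl i))) + v (Sum.inr k)) t₀ :=
    hD.congr_of_eventuallyEq (Filter.Eventually.of_forall hcoord)
  refine hη'.congr_deriv (Eq.symm ?_)
  rw [Finset.sum_add_distrib]
  have hk := hkey' k
  have h1 : (N'ᵀ.mulVec (xα t₀)) k = ∑ i, N' i k * x t₀ (Sum.inl i) := by
    simp [Matrix.mulVec, dotProduct, transpose_apply, hxα]
  simp only [Pi.add_apply]
  conv_rhs => rw [add_assoc]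
  rw [hk, h1, add_comm]
end

section
/- (Zero dynamics, equation (25) of the paper.) If in addition there is an invertible p×p real matrix C such that the output y(t) = C · x_α(t) vanishes for all t, then x_α(t) = 0 for all t, the curve η(t) = N(t)ᵀ x_α(t) + x_β(t) coincides with x_β, and η is differentiable at t₀ with η'(t₀) = M₂₂(t₀)⁻¹ l_β(t₀). -/
/-!
Vanishing of the output `C x_α` with `C` invertible forces `x_α ≡ 0`, hence `η = x_β`, and the
`α`-block of `x'(t₀)` vanishes. Since `x'(t₀) = M⁻¹ l + G τ = M⁻¹ (l + (τ, 0))`, the vector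
`x'(t₀) = (0, x_β'(t₀))` solves a block system whose `β`-rows read `M₂₂ x_β'(t₀) = l_β`.
-/

open Matrix

section Derivative

variable {𝕜 : Type*} [NontriviallyNormedField 𝕜] {ι κ : Type*}
  {x : 𝕜 → ι → 𝕜} {d : ι → 𝕜} {t : 𝕜}

theorem HasDerivAt.comp_reindex (hx : HasDerivAt x d t) (e : κ → ι) :
    HasDerivAt (fun s => x s ∘ e) (d ∘ e) t :=
  hasDerivAt_pi.2 fun k => hasDerivAt_pi.1 hx (e k)

theorem HasDerivAt.comp_reindex_eq_zero [Fintype κ] (hx : HasDerivAt x d t) {e : κ → ι}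
    (h₀ : ∀ s, x s ∘ e = 0) : d ∘ e = 0 := by
  have hconst : (fun s => x s ∘ e) = fun _ => 0 := funext h₀
  have h := hx.comp_reindex e
  rw [hconst] at h
  exact h.unique (hasDerivAt_const t 0)

end Derivative

namespace Matrix

variable {R : Type*} [CommRing R] {m n : Type*} [Fintype m] [Fintype n] [DecidableEq n]

theorem inr_eq_inv_mulVec_of_fromBlocks_mulVec {A : Matrix m m R} {B : Matrix m n R}
    {C : Matrix n m R} {D : Matrix n n R} (hD : IsUnit D) {v w : m ⊕ n → R}
    (hv : fromBlocks A B C D *ᵥ v = w) (hinl : v ∘ Sum.inl = 0) :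
    v ∘ Sum.inr = D⁻¹ *ᵥ (w ∘ Sum.inr) := by
  have hrows : D *ᵥ (v ∘ Sum.inr) = w ∘ Sum.inr := by
    simp only [← hv, fromBlocks_mulVec, hinl, mulVec_zero, zero_add, Sum.elim_comp_inr]
  rw [← hrows, mulVec_mulVec, nonsing_inv_mul _ ((isUnit_iff_isUnit_det D).1 hD), one_mulVec]

end Matrix

theorem stmt_9_general {p q : ℕ}
    (M₁₁ : ℝ → Matrix (Fin p) (Fin p) ℝ) (M₁₂ : ℝ → Matrix (Fin p) (Fin q) ℝ)
    (M₂₂ : ℝ → Matrix (Fin q) (Fin q) ℝ)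
    (M : ℝ → Matrix (Fin p ⊕ Fin q) (Fin p ⊕ Fin q) ℝ)
    (hM : ∀ t, M t = Matrix.fromBlocks (M₁₁ t) (M₁₂ t) (M₁₂ t)ᵀ (M₂₂ t))
    (hM₂₂inv : ∀ t, IsUnit (M₂₂ t)) (hMinv : ∀ t, IsUnit (M t))
    (N : ℝ → Matrix (Fin p) (Fin q) ℝ)
    (G : ℝ → Matrix (Fin p ⊕ Fin q) (Fin p) ℝ)
    (hG : ∀ t, G t = (M t)⁻¹ *
      Matrix.fromRows (1 : Matrix (Fin p) (Fin p) ℝ) (0 : Matrix (Fin q) (Fin p) ℝ))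
    (x : ℝ → (Fin p ⊕ Fin q) → ℝ) (l : ℝ → (Fin p ⊕ Fin q) → ℝ) (τ : ℝ → Fin p → ℝ)
    (xα : ℝ → Fin p → ℝ) (hxα : ∀ t i, xα t i = x t (Sum.inl i))
    (xβ : ℝ → Fin q → ℝ) (hxβ : ∀ t j, xβ t j = x t (Sum.inr j))
    (lβ : ℝ → Fin q → ℝ) (hlβ : ∀ t j, lβ t j = l t (Sum.inr j))
    (t₀ : ℝ)
    (hx : HasDerivAt x ((M t₀)⁻¹.mulVec (l t₀) + (G t₀).mulVec (τ t₀)) t₀)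
    (η : ℝ → Fin q → ℝ)
    (hη : ∀ t, η t = (N t)ᵀ.mulVec (xα t) + xβ t)
    (C : Matrix (Fin p) (Fin p) ℝ) (hC : IsUnit C)
    (y : ℝ → Fin p → ℝ) (hy : ∀ t, y t = C.mulVec (xα t))
    (hy0 : ∀ t, y t = 0) :
    (∀ t, xα t = 0) ∧ (∀ t, η t = xβ t) ∧
      HasDerivAt η (((M₂₂ t₀)⁻¹).mulVec (lβ t₀)) t₀ := by
  have hxα₀ : ∀ t, xα t = 0 := fun t =>
    mulVec_injective_of_isUnit hC <| by rw [← hy, hy0, mulVec_zero]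
  have hηβ : ∀ t, η t = xβ t := fun t => by rw [hη, hxα₀, mulVec_zero, zero_add]
  refine ⟨hxα₀, hηβ, ?_⟩
  generalize hd_def : (M t₀)⁻¹ *ᵥ l t₀ + G t₀ *ᵥ τ t₀ = d at hx
  have hd : M t₀ *ᵥ d = l t₀ + Sum.elim (τ t₀) 0 := by
    rw [← hd_def, hG, ← mulVec_mulVec, ← mulVec_add, mulVec_mulVec,
      mul_nonsing_inv _ ((isUnit_iff_isUnit_det _).1 (hMinv t₀)), one_mulVec, fromRows_mulVec,
      one_mulVec, zero_mulVec]
  have hd_inl : d ∘ Sum.inl = 0 :=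
    hx.comp_reindex_eq_zero fun t => by rw [← hxα₀ t]; exact funext fun i => (hxα t i).symm
  have hd_inr : d ∘ Sum.inr = (M₂₂ t₀)⁻¹ *ᵥ lβ t₀ := by
    rw [inr_eq_inv_mulVec_of_fromBlocks_mulVec (hM₂₂inv t₀) (hM t₀ ▸ hd) hd_inl]
    congr 1
    ext j
    simp [hlβ]
  have hxβ_eq : xβ = fun t => x t ∘ Sum.inr := funext fun t => funext (hxβ t)
  rw [funext hηβ, hxβ_eq, ← hd_inr]
  exact hx.comp_reindex Sum.inr

/-- (Zero dynamics, equation (25) of the paper.) If in addition there is an invertible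
p×p real matrix C such that the output y(t) = C · x_α(t) vanishes for all t, then
x_α(t) = 0 for all t, the curve η(t) = N(t)ᵀ x_α(t) + x_β(t) coincides with x_β,
and η is differentiable at t₀ with η'(t₀) = M₂₂(t₀)⁻¹ l_β(t₀). -/
theorem stmt_9 {p q : ℕ}
    (M₁₁ : ℝ → Matrix (Fin p) (Fin p) ℝ) (M₁₂ : ℝ → Matrix (Fin p) (Fin q) ℝ)
    (M₂₂ : ℝ → Matrix (Fin q) (Fin q) ℝ)
    (M : ℝ → Matrix (Fin p ⊕ Fin q) (Fin p ⊕ Fin q) ℝ)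
    (hM : ∀ t, M t = Matrix.fromBlocks (M₁₁ t) (M₁₂ t) (M₁₂ t)ᵀ (M₂₂ t))
    (hM₁₁sym : ∀ t, (M₁₁ t)ᵀ = M₁₁ t) (hM₂₂sym : ∀ t, (M₂₂ t)ᵀ = M₂₂ t)
    (hM₂₂inv : ∀ t, IsUnit (M₂₂ t)) (hMinv : ∀ t, IsUnit (M t))
    (N : ℝ → Matrix (Fin p) (Fin q) ℝ) (hN : ∀ t, N t = M₁₂ t * (M₂₂ t)⁻¹)
    (G : ℝ → Matrix (Fin p ⊕ Fin q) (Fin p) ℝ)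
    (hG : ∀ t, G t = (M t)⁻¹ *
      Matrix.fromRows (1 : Matrix (Fin p) (Fin p) ℝ) (0 : Matrix (Fin q) (Fin p) ℝ))
    (x : ℝ → (Fin p ⊕ Fin q) → ℝ) (l : ℝ → (Fin p ⊕ Fin q) → ℝ) (τ : ℝ → Fin p → ℝ)
    (xα : ℝ → Fin p → ℝ) (hxα : ∀ t i, xα t i = x t (Sum.inl i))
    (xβ : ℝ → Fin q → ℝ) (hxβ : ∀ t j, xβ t j = x t (Sum.inr j))
    (lβ : ℝ → Fin q → ℝ) (hlβ : ∀ t j, lβ t j = l t (Sum.inr j))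
    (t₀ : ℝ)
    (hx : HasDerivAt x ((M t₀)⁻¹.mulVec (l t₀) + (G t₀).mulVec (τ t₀)) t₀)
    (N' : Matrix (Fin p) (Fin q) ℝ)
    (hN' : ∀ i k, HasDerivAt (fun t => N t i k) (N' i k) t₀)
    (η : ℝ → Fin q → ℝ)
    (hη : ∀ t, η t = (N t)ᵀ.mulVec (xα t) + xβ t)
    (C : Matrix (Fin p) (Fin p) ℝ) (hC : IsUnit C)
    (y : ℝ → Fin p → ℝ) (hy : ∀ t, y t = C.mulVec (xα t))
    (hy0 : ∀ t, y t = 0) :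
    (∀ t, xα t = 0) ∧ (∀ t, η t = xβ t) ∧
      HasDerivAt η (((M₂₂ t₀)⁻¹).mulVec (lβ t₀)) t₀ :=
  stmt_9_general M₁₁ M₁₂ M₂₂ M hM hM₂₂inv hMinv N G hG x l τ xα hxα xβ hxβ lβ hlβ t₀ hx η hη C hC y
    hy hy0
end
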